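/- (Theorem 3.2, relative error bound for qdot.) Let x, y ∈ ℝⁿ with x_i y_i ≠ 0 for every i, set z = x⊙y, and suppose the integer intervals {(ℓ_k, u_k]}_{k=1}^p partition [e_min(z), e_max(z)]. Assume e_max(z) ≤ flexp(xᵀy) and that 2^{flexp(xᵀy)} ≤ |xᵀy| (the latter holds, e.g., whenever |xᵀy| ≥ 1). Let z̃ be any quantized dot product of x and y with respect to the bins B_k = B_{ℓ_k,u_k}(z) and accuracies ε(1),…,ε(p) > 0. Then |xᵀy − z̃| ≤ |xᵀy| · Σ_{k=1}^p M_k · 2^{u_k − e_max(z) + 1} · ε(k), where M_k is the cardinality of B_{ℓ_k,u_k}(z). -/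
import Mathlib


/-- `flexp x = ⌊log₂ |x|⌋` if `|x| ≥ 1` and `⌈log₂ |x|⌉` if `|x| < 1`. -/
noncomputable def flexp (x : ℝ) : ℤ :=
  if 1 ≤ |x| then ⌊Real.logb 2 |x|⌋ else ⌈Real.logb 2 |x|⌉

/-- `emax z = max_i flexp (z i)`. -/
noncomputable def emax {n : ℕ} [NeZero n] (z : Fin n → ℝ) : ℤ :=
  Finset.univ.sup' Finset.univ_nonempty (fun i => flexp (z i))

/-- `emin z = min_i flexp (z i)`. -/
noncomputable def emin {n : ℕ} [NeZero n] (z : Fin n → ℝ) : ℤ :=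
  Finset.univ.inf' Finset.univ_nonempty (fun i => flexp (z i))

/-- The `(l,u)`-exponent bin of `z`: indices `i` with `l < flexp (z i) ≤ u`. -/
noncomputable def bin {n : ℕ} (z : Fin n → ℝ) (l u : ℤ) : Finset (Fin n) :=
  Finset.univ.filter (fun i => l < flexp (z i) ∧ flexp (z i) ≤ u)

/-- `zt` is a quantized dot product of `x` and `y` w.r.t. bins `B` and accuracies `ε`. -/
def IsQuantDot {n p : ℕ} (x y : Fin n → ℝ) (B : Fin p → Finset (Fin n))
    (ε : Fin p → ℝ) (zt : ℝ) : Prop :=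
  ∃ δ : Fin n → ℝ, (∀ k : Fin p, ∀ j ∈ B k, |δ j| ≤ ε k) ∧
    zt = ∑ k : Fin p, ∑ j ∈ B k, x j * y j * (1 + δ j)

lemma abs_le_two_zpow_flexp {z : ℝ} (hz : z ≠ 0) : |z| ≤ (2:ℝ) ^ (flexp z + 1) := by
  have hpos : 0 < |z| := abs_pos.mpr hz
  have h2 : |z| = (2:ℝ) ^ (Real.logb 2 |z|) :=
    (Real.rpow_logb two_pos (by norm_num) hpos).symm
  unfold flexp
  split_ifs with h
  · have hle : Real.logb 2 |z| ≤ ((⌊Real.logb 2 |z|⌋ + 1 : ℤ) : ℝ) := by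
      push_cast; exact (Int.lt_floor_add_one _).le
    calc |z| = (2:ℝ) ^ (Real.logb 2 |z|) := h2
      _ ≤ (2:ℝ) ^ (((⌊Real.logb 2 |z|⌋ + 1 : ℤ) : ℝ)) :=
        Real.rpow_le_rpow_of_exponent_le one_le_two hle
      _ = (2:ℝ) ^ (⌊Real.logb 2 |z|⌋ + 1 : ℤ) := Real.rpow_intCast 2 _
  · have hle : Real.logb 2 |z| ≤ ((⌈Real.logb 2 |z|⌉ + 1 : ℤ) : ℝ) := by
      push_cast
      exact le_trans (Int.le_ceil _) (by linarith)
    calc |z| = (2:ℝ) ^ (Real.logb 2 |z|) := h2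
      _ ≤ (2:ℝ) ^ (((⌈Real.logb 2 |z|⌉ + 1 : ℤ) : ℝ)) :=
        Real.rpow_le_rpow_of_exponent_le one_le_two hle
      _ = (2:ℝ) ^ (⌈Real.logb 2 |z|⌉ + 1 : ℤ) := Real.rpow_intCast 2 _

theorem stmt5 {n p : ℕ} [NeZero n] (x y : Fin n → ℝ)
    (hxy : ∀ i, x i * y i ≠ 0)
    (l u : Fin p → ℤ)
    (hpart : ∀ e : ℤ, emin (fun i => x i * y i) ≤ e → e ≤ emax (fun i => x i * y i) →
      ∃! k : Fin p, l k < e ∧ e ≤ u k)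
    (hE : emax (fun i => x i * y i) ≤ flexp (∑ i : Fin n, x i * y i))
    (h2E : (2 : ℝ) ^ (flexp (∑ i : Fin n, x i * y i)) ≤ |∑ i : Fin n, x i * y i|)
    (ε : Fin p → ℝ) (hε : ∀ k, 0 < ε k) (zt : ℝ)
    (hzt : IsQuantDot x y (fun k => bin (fun i => x i * y i) (l k) (u k)) ε zt) :
    |(∑ i : Fin n, x i * y i) - zt| ≤
      |∑ i : Fin n, x i * y i| *
        ∑ k : Fin p,
          ((bin (fun i => x i * y i) (l k) (u k)).card : ℝ) *
            (2 : ℝ) ^ (u k - emax (fun i => x i * y i) + 1) * ε k := by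
  set z : Fin n → ℝ := fun i => x i * y i with hzdef
  set s : ℝ := ∑ i : Fin n, x i * y i with hsdef
  set E : ℤ := emax z with hEdef
  obtain ⟨δ, hδ, hzteq⟩ := hzt
  -- each index belongs to a unique bin
  have hmem : ∀ i : Fin n, ∃! k : Fin p, i ∈ bin z (l k) (u k) := by
    intro i
    have h1 : emin z ≤ flexp (z i) := by
      unfold emin; exact Finset.inf'_le (fun j => flexp (z j)) (Finset.mem_univ i)
    have h2 : flexp (z i) ≤ emax z := by
      unfold emax; exact Finset.le_sup' (fun j => flexp (z j)) (Finset.mem_univ i)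
    obtain ⟨k, hk, huniq⟩ := hpart _ h1 h2
    refine ⟨k, by simp [bin, hk.1, hk.2], fun k' hk' => huniq k' ?_⟩
    simpa [bin] using hk'
  choose κ hκ hκu using hmem
  have hbin : ∀ k, bin z (l k) (u k) = Finset.univ.filter (fun i => κ i = k) := by
    intro k
    ext i
    simp only [Finset.mem_filter, Finset.mem_univ, true_and]
    constructor
    · intro hi; exact (hκu i k hi).symm
    · intro hi; exact hi ▸ hκ i
  -- sum over bins equals total sum
  have hsumfib : ∀ f : Fin n → ℝ,
      ∑ k : Fin p, ∑ j ∈ bin z (l k) (u k), f j = ∑ j : Fin n, f j := by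
    intro f
    calc ∑ k : Fin p, ∑ j ∈ bin z (l k) (u k), f j
        = ∑ k : Fin p, ∑ j ∈ Finset.univ.filter (fun i => κ i = k), f j := by
          refine Finset.sum_congr rfl fun k _ => by rw [hbin k]
      _ = ∑ j : Fin n, f j := Finset.sum_fiberwise _ _ _
  -- the error is the δ-weighted sum
  have herr : s - zt = -∑ k : Fin p, ∑ j ∈ bin z (l k) (u k), z j * δ j := by
    have : zt = ∑ k : Fin p, ∑ j ∈ bin z (l k) (u k), (z j + z j * δ j) := by
      rw [hzteq]; congr 1; funext k; apply Finset.sum_congr rfl; intro j _; ring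
    rw [this]
    simp only [Finset.sum_add_distrib]
    rw [hsumfib (fun j => z j)]
    ring
  rw [herr, abs_neg]
  -- bound per-bin terms
  have hsE : (2:ℝ) ^ E ≤ |s| := le_trans (by
    apply zpow_le_zpow_right₀ one_le_two hE) h2E
  have hspos : (0:ℝ) < |s| := lt_of_lt_of_le (zpow_pos two_pos E) hsE
  have hterm : ∀ k : Fin p,
      |∑ j ∈ bin z (l k) (u k), z j * δ j| ≤
        |s| * (((bin z (l k) (u k)).card : ℝ) * (2:ℝ) ^ (u k - E + 1) * ε k) := by
    intro k
    calc |∑ j ∈ bin z (l k) (u k), z j * δ j|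
        ≤ ∑ j ∈ bin z (l k) (u k), |z j * δ j| := Finset.abs_sum_le_sum_abs _ _
      _ ≤ ∑ j ∈ bin z (l k) (u k), |s| * ((2:ℝ) ^ (u k - E + 1) * ε k) := by
          apply Finset.sum_le_sum
          intro j hj
          have hju : flexp (z j) ≤ u k := by
            simp only [bin, Finset.mem_filter] at hj; exact hj.2.2
          have h1 : |z j| ≤ (2:ℝ) ^ (flexp (z j) + 1) := abs_le_two_zpow_flexp (hxy j)
          have h2 : (2:ℝ) ^ (flexp (z j) + 1) ≤ (2:ℝ) ^ (u k + 1) :=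
            zpow_le_zpow_right₀ one_le_two (by omega)
          have h3 : |δ j| ≤ ε k := hδ k j hj
          have h4 : ((2:ℝ) ^ (u k + 1)) = (2:ℝ) ^ (u k - E + 1) * (2:ℝ) ^ E := by
            rw [← zpow_add₀ (by norm_num : (2:ℝ) ≠ 0)]; ring_nf
          rw [abs_mul]
          calc |z j| * |δ j| ≤ (2:ℝ) ^ (u k + 1) * ε k := by
                apply mul_le_mul (le_trans h1 h2) h3 (abs_nonneg _)
                  (le_of_lt (zpow_pos two_pos _))
            _ = ((2:ℝ) ^ (u k - E + 1) * (2:ℝ) ^ E) * ε k := by rw [h4]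
            _ ≤ ((2:ℝ) ^ (u k - E + 1) * |s|) * ε k := by
                apply mul_le_mul_of_nonneg_right _ (hε k).le
                exact mul_le_mul_of_nonneg_left hsE (le_of_lt (zpow_pos two_pos _))
            _ = |s| * ((2:ℝ) ^ (u k - E + 1) * ε k) := by ring
      _ = |s| * (((bin z (l k) (u k)).card : ℝ) * (2:ℝ) ^ (u k - E + 1) * ε k) := by
          rw [Finset.sum_const, nsmul_eq_mul]; ring
  calc |∑ k : Fin p, ∑ j ∈ bin z (l k) (u k), z j * δ j|
      ≤ ∑ k : Fin p, |∑ j ∈ bin z (l k) (u k), z j * δ j| :=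
        Finset.abs_sum_le_sum_abs _ _
    _ ≤ ∑ k : Fin p, |s| * (((bin z (l k) (u k)).card : ℝ) * (2:ℝ) ^ (u k - E + 1) * ε k) :=
        Finset.sum_le_sum fun k _ => hterm k
    _ = |s| * ∑ k : Fin p, ((bin z (l k) (u k)).card : ℝ) * (2:ℝ) ^ (u k - E + 1) * ε k := by
        rw [Finset.mul_sum]
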